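/- arXiv:2407.00563 — 6 statements merged into one kernel-verified Lean document; each statement's English description precedes it below -/
import Mathlib

section
/- Let F1 and F2 be sensori-computational devices that are output simulatable modulo relations R1 ⊆ A × B and R2 ⊆ C × E respectively, where R1 and R2 are length compatible. Then the direct product F1 × F2 is output simulatable modulo the product relation R_{1×2}, which relates (a1,c1)(a2,c2)…(an,cn) to (b1,e1)(b2,e2)…(bm,em) if and only if a1a2…an R1 b1b2…bm and c1c2…cn R2 e1e2…em. -/
/-- A sensori-computational device: a finite nonempty set of states `V`,
a nonempty set `V0` of initial states, observations `Y`, a transition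
labelling `tr`, and an output function `out` with nonempty values. -/
structure SCD (Y : Type) (C : Type) : Type 1 where
  V : Type
  finV : Fintype V
  V0 : Set V
  V0_nonempty : V0.Nonempty
  tr : V → V → Set Y
  out : V → Set C
  out_nonempty : ∀ v, (out v).Nonempty

namespace SCD

variable {Y C : Type}

/-- `Traces F v s w`: string `s` reaches state `w` when traced from `v`. -/
inductive Traces (F : SCD Y C) : F.V → List Y → F.V → Prop
  | nil (v : F.V) : Traces F v [] v
  | cons {v w u : F.V} {y : Y} {s : List Y} :
      y ∈ F.tr v w → Traces F w s u → Traces F v (y :: s) u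

/-- The set of states reached by `s` from some initial state. -/
def reached (F : SCD Y C) (s : List Y) : Set F.V :=
  {w | ∃ v0 ∈ F.V0, F.Traces v0 s w}

/-- The (interaction) language of `F`. -/
def lang (F : SCD Y C) : Set (List Y) :=
  {s | (F.reached s).Nonempty}

/-- The set of outputs of all states reached by `s`. -/
def outs (F : SCD Y C) (s : List Y) : Set C :=
  ⋃ v ∈ F.reached s, F.out v

end SCD

/-- `F'` output simulates `F` modulo the relation `R`. -/
def OutSim {A B C : Type} (F : SCD A C) (F' : SCD B C)
    (R : List A → List B → Prop) : Prop :=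
  ∀ s ∈ F.lang,
    (∃ t, R s t) ∧ ∀ t, R s t → t ∈ F'.lang ∧ F'.outs t ⊆ F.outs s

/-- `F` is `R`-simulatable: some device output simulates `F` modulo `R`. -/
def Simulatable {A B C : Type} (F : SCD A C)
    (R : List A → List B → Prop) : Prop :=
  ∃ F' : SCD B C, OutSim F F' R

/-- Composition of relations (on strings), `R ⨟ S`. -/
def relComp {α β γ : Type*} (R : α → β → Prop) (S : β → γ → Prop) :
    α → γ → Prop :=
  fun a c => ∃ b, R a b ∧ S b c
/-- The direct product of two sensori-computational devices. -/
def SCD.prod {A B C E : Type} (F : SCD A C) (G : SCD B E) :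
    SCD (A × B) (C × E) where
  V := F.V × G.V
  finV := by haveI := F.finV; haveI := G.finV; exact inferInstance
  V0 := F.V0 ×ˢ G.V0
  V0_nonempty := F.V0_nonempty.prod G.V0_nonempty
  tr := fun p q => F.tr p.1 q.1 ×ˢ G.tr p.2 q.2
  out := fun p => F.out p.1 ×ˢ G.out p.2
  out_nonempty := fun p => (F.out_nonempty p.1).prod (G.out_nonempty p.2)

/-! Everything about `F × G` splits componentwise: a string of pairs traces a path of pairs
exactly when its two projections trace the component paths. Hence the language of the product
is the set of strings whose projections lie in the two languages, and the outputs of a string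
are the product of the outputs of its projections. Pairing the two simulators therefore
simulates the product, and length compatibility is exactly what allows a pair of related
strings to be zipped into one related string of pairs. -/

namespace SCD

variable {A B C E : Type}

theorem traces_nil_iff {F : SCD A C} {v u : F.V} : F.Traces v [] u ↔ v = u :=
  ⟨fun h => by cases h; rfl, fun h => h ▸ .nil v⟩

theorem traces_cons_iff {F : SCD A C} {v u : F.V} {y : A} {s : List A} :
    F.Traces v (y :: s) u ↔ ∃ w, y ∈ F.tr v w ∧ F.Traces w s u :=
  ⟨fun h => by cases h with | cons hy h => exact ⟨_, hy, h⟩,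
    fun ⟨_, hy, h⟩ => .cons hy h⟩

theorem traces_prod_iff {F : SCD A C} {G : SCD B E} {p q : F.V × G.V} {s : List (A × B)} :
    (F.prod G).Traces p s q ↔
      F.Traces p.1 (s.map Prod.fst) q.1 ∧ G.Traces p.2 (s.map Prod.snd) q.2 := by
  induction s generalizing p with
  | nil =>
    refine traces_nil_iff.trans ?_
    rw [List.map_nil, List.map_nil, traces_nil_iff, traces_nil_iff]
    exact Prod.ext_iff
  | cons y s ih =>
    refine traces_cons_iff.trans ?_
    rw [List.map_cons, List.map_cons, traces_cons_iff, traces_cons_iff]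
    constructor
    · rintro ⟨w, ⟨hy₁, hy₂⟩, h⟩
      obtain ⟨h₁, h₂⟩ := ih.1 h
      exact ⟨⟨w.1, hy₁, h₁⟩, ⟨w.2, hy₂, h₂⟩⟩
    · rintro ⟨⟨w₁, hy₁, h₁⟩, ⟨w₂, hy₂, h₂⟩⟩
      exact ⟨(w₁, w₂), ⟨hy₁, hy₂⟩, ih.2 ⟨h₁, h₂⟩⟩

theorem reached_prod (F : SCD A C) (G : SCD B E) (s : List (A × B)) :
    (F.prod G).reached s = F.reached (s.map Prod.fst) ×ˢ G.reached (s.map Prod.snd) := by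
  ext ⟨u, x⟩
  constructor
  · rintro ⟨⟨v, w⟩, ⟨hv, hw⟩, h⟩
    obtain ⟨h₁, h₂⟩ := traces_prod_iff.1 h
    exact ⟨⟨v, hv, h₁⟩, ⟨w, hw, h₂⟩⟩
  · rintro ⟨⟨v, hv, h₁⟩, ⟨w, hw, h₂⟩⟩
    exact ⟨(v, w), ⟨hv, hw⟩, traces_prod_iff.2 ⟨h₁, h₂⟩⟩

theorem mem_lang_prod {F : SCD A C} {G : SCD B E} {s : List (A × B)} :
    s ∈ (F.prod G).lang ↔ s.map Prod.fst ∈ F.lang ∧ s.map Prod.snd ∈ G.lang := by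
  simp only [lang, Set.mem_ofPred_eq, reached_prod]
  exact Set.prod_nonempty_iff

theorem outs_prod (F : SCD A C) (G : SCD B E) (s : List (A × B)) :
    (F.prod G).outs s = F.outs (s.map Prod.fst) ×ˢ G.outs (s.map Prod.snd) := by
  ext ⟨c, e⟩
  simp only [outs, reached_prod, Set.mem_iUnion, Set.mem_prod, exists_prop]
  constructor
  · rintro ⟨p, ⟨hp₁, hp₂⟩, hc, he⟩
    exact ⟨⟨p.1, hp₁, hc⟩, ⟨p.2, hp₂, he⟩⟩
  · rintro ⟨⟨u, hu, hc⟩, ⟨x, hx, he⟩⟩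
    exact ⟨(u, x), ⟨hu, hx⟩, hc, he⟩

end SCD

def prodRel {A B C E : Type} (R₁ : List A → List B → Prop) (R₂ : List C → List E → Prop)
    (s : List (A × C)) (t : List (B × E)) : Prop :=
  R₁ (s.map Prod.fst) (t.map Prod.fst) ∧ R₂ (s.map Prod.snd) (t.map Prod.snd)

theorem OutSim.prod {A₁ A₂ B₁ B₂ C₁ C₂ : Type} {F₁ : SCD A₁ C₁} {F₂ : SCD A₂ C₂}
    {G₁ : SCD B₁ C₁} {G₂ : SCD B₂ C₂}
    {R₁ : List A₁ → List B₁ → Prop} {R₂ : List A₂ → List B₂ → Prop}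
    (hLC : ∀ a ∈ F₁.lang, ∀ c ∈ F₂.lang, a.length = c.length →
        ∃ b e, b.length = e.length ∧ R₁ a b ∧ R₂ c e)
    (h₁ : OutSim F₁ G₁ R₁) (h₂ : OutSim F₂ G₂ R₂) :
    OutSim (F₁.prod F₂) (G₁.prod G₂) (prodRel R₁ R₂) := by
  intro s hs
  obtain ⟨hs₁, hs₂⟩ := SCD.mem_lang_prod.1 hs
  constructor
  · obtain ⟨b, e, hbe, hb, he⟩ := hLC _ hs₁ _ hs₂ (by simp)
    refine ⟨b.zip e, ?_, ?_⟩
    · rwa [List.map_fst_zip hbe.le]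
    · rwa [List.map_snd_zip hbe.ge]
  · rintro t ⟨ht₁, ht₂⟩
    obtain ⟨hlang₁, houts₁⟩ := (h₁ _ hs₁).2 _ ht₁
    obtain ⟨hlang₂, houts₂⟩ := (h₂ _ hs₂).2 _ ht₂
    refine ⟨SCD.mem_lang_prod.2 ⟨hlang₁, hlang₂⟩, ?_⟩
    rw [SCD.outs_prod, SCD.outs_prod]
    exact Set.prod_mono houts₁ houts₂

theorem stmt5_general {Y1 Y2 B E C1 C2 : Type}
    (F1 : SCD Y1 C1) (F2 : SCD Y2 C2)
    (R1 : List Y1 → List B → Prop) (R2 : List Y2 → List E → Prop)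
    (DA : Set (List Y1)) (DC : Set (List Y2))
    (hA : F1.lang ⊆ DA) (hC : F2.lang ⊆ DC)
    (hLC : ∀ a ∈ DA, ∀ c ∈ DC, a.length = c.length →
        ∃ b e, b.length = e.length ∧ R1 a b ∧ R2 c e)
    (h1 : Simulatable F1 R1) (h2 : Simulatable F2 R2) :
    Simulatable (F1.prod F2)
      (fun (s : List (Y1 × Y2)) (t : List (B × E)) =>
        R1 (s.map Prod.fst) (t.map Prod.fst) ∧
        R2 (s.map Prod.snd) (t.map Prod.snd)) := by
  obtain ⟨G1, hG1⟩ := h1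
  obtain ⟨G2, hG2⟩ := h2
  exact ⟨G1.prod G2, OutSim.prod (fun a ha c hc => hLC a (hA ha) c (hC hc)) hG1 hG2⟩

/-- if `F1` and `F2` are output simulatable modulo length
compatible relations `R1 ⊆ DA × B` and `R2 ⊆ DC × E`, then `F1 × F2` is
output simulatable modulo the product relation, which relates a string of
pairs to a string of pairs iff the componentwise projections are related by
`R1` and `R2` respectively. -/
theorem stmt5 {Y1 Y2 B E C1 C2 : Type}
    (F1 : SCD Y1 C1) (F2 : SCD Y2 C2)
    (R1 : List Y1 → List B → Prop) (R2 : List Y2 → List E → Prop)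
    (DA : Set (List Y1)) (DC : Set (List Y2))
    (hA : F1.lang ⊆ DA) (hC : F2.lang ⊆ DC)
    (hR1dom : ∀ a b, R1 a b → a ∈ DA)
    (hR2dom : ∀ c e, R2 c e → c ∈ DC)
    (hLC : ∀ a ∈ DA, ∀ c ∈ DC, a.length = c.length →
        ∃ b e, b.length = e.length ∧ R1 a b ∧ R2 c e)
    (h1 : Simulatable F1 R1) (h2 : Simulatable F2 R2) :
    Simulatable (F1.prod F2)
      (fun (s : List (Y1 × Y2)) (t : List (B × E)) =>
        R1 (s.map Prod.fst) (t.map Prod.fst) ∧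
        R2 (s.map Prod.snd) (t.map Prod.snd)) :=
  stmt5_general F1 F2 R1 R2 DA DC hA hC hLC h1 h2
end

section
/- Let F1 and F2 be sensori-computational devices with observation variators (D1, ▷1) and (D2, ▷2) respectively. If F1 has a derivative under (D1, ▷1) and F2 has a derivative under (D2, ▷2), then the direct product F1 × F2 has a derivative under the direct product variator (D1 × D2, ▷_{1×2}), i.e., F1 × F2 is Δ(F1 × F2, D1 × D2)-simulatable. -/
/-- `DeltaFrom rel y s ds`: from previous symbol `y`, the remaining string `s`
corresponds to the difference string `ds` via the ternary relation `rel`. -/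
inductive DeltaFrom {Y D : Type} (rel : Y → D → Y → Prop) :
    Y → List Y → List D → Prop
  | nil (y : Y) : DeltaFrom rel y [] []
  | cons {y y' : Y} {d : D} {s : List Y} {ds : List D} :
      rel y d y' → DeltaFrom rel y' s ds → DeltaFrom rel y (y' :: s) (d :: ds)

/-- The delta relation `Δ(F,D)` associated to a variator `rel` and a language
`L` (taken to be `L(F)`): it relates `ε` to `ε`, and
`y₀y₁…yₘ ∈ L` to `y₀d₁…dₘ` whenever `rel y_{k-1} d_k y_k` for each `k`.
The codomain alphabet `Y ⊕ D` holds the leading absolute symbol (left) and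
the differences (right). -/
def DeltaRel {Y D : Type} (L : Set (List Y)) (rel : Y → D → Y → Prop) :
    List Y → List (Y ⊕ D) → Prop :=
  fun s t => s ∈ L ∧
    ((s = [] ∧ t = []) ∨
      ∃ (y : Y) (rest : List Y) (ds : List D),
        s = y :: rest ∧ t = Sum.inl y :: ds.map Sum.inr ∧
        DeltaFrom rel y rest ds)
section Aux

variable {Y1 Y2 D1 D2 C1 C2 Z : Type}

lemma prod_traces_iff (F : SCD Y1 C1) (G : SCD Y2 C2)
    {p q : (F.prod G).V} {s : List (Y1 × Y2)} :
    (F.prod G).Traces p s q ↔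
      F.Traces p.1 (s.map Prod.fst) q.1 ∧ G.Traces p.2 (s.map Prod.snd) q.2 := by
  constructor
  · intro h
    induction h with
    | nil v => exact ⟨.nil _, .nil _⟩
    | cons hy _ ih => exact ⟨.cons hy.1 ih.1, .cons hy.2 ih.2⟩
  · rintro ⟨h1, h2⟩
    obtain ⟨p1, p2⟩ := p
    obtain ⟨q1, q2⟩ := q
    induction s generalizing p1 p2 with
    | nil => cases h1; cases h2; exact .nil _
    | cons z s ih =>
      cases h1 with
      | cons hy1 h1' =>
        cases h2 with
        | cons hy2 h2' =>
          exact .cons (show z ∈ _ ×ˢ _ from ⟨hy1, hy2⟩) (ih _ _ h1' h2')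

/-- A relabeled product device: observations `Z` mapped into pairs via `ψ`. -/
def pairSCD (G1 : SCD Y1 C1) (G2 : SCD Y2 C2) (ψ : Z → Y1 × Y2) :
    SCD Z (C1 × C2) where
  V := G1.V × G2.V
  finV := by haveI := G1.finV; haveI := G2.finV; exact inferInstance
  V0 := G1.V0 ×ˢ G2.V0
  V0_nonempty := G1.V0_nonempty.prod G2.V0_nonempty
  tr := fun p q => {z | (ψ z).1 ∈ G1.tr p.1 q.1 ∧ (ψ z).2 ∈ G2.tr p.2 q.2}
  out := fun p => G1.out p.1 ×ˢ G2.out p.2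
  out_nonempty := fun p => (G1.out_nonempty p.1).prod (G2.out_nonempty p.2)

lemma pair_traces_iff (G1 : SCD Y1 C1) (G2 : SCD Y2 C2) (ψ : Z → Y1 × Y2)
    {p q : (pairSCD G1 G2 ψ).V} {s : List Z} :
    (pairSCD G1 G2 ψ).Traces p s q ↔
      G1.Traces p.1 ((s.map ψ).map Prod.fst) q.1 ∧
      G2.Traces p.2 ((s.map ψ).map Prod.snd) q.2 := by
  constructor
  · intro h
    induction h with
    | nil v => exact ⟨.nil _, .nil _⟩
    | cons hy _ ih => exact ⟨.cons hy.1 ih.1, .cons hy.2 ih.2⟩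
  · rintro ⟨h1, h2⟩
    obtain ⟨p1, p2⟩ := p
    obtain ⟨q1, q2⟩ := q
    induction s generalizing p1 p2 with
    | nil => cases h1; cases h2; exact .nil _
    | cons z s ih =>
      cases h1 with
      | cons hy1 h1' =>
        cases h2 with
        | cons hy2 h2' =>
          exact .cons (show _ ∧ _ from ⟨hy1, hy2⟩) (ih _ _ h1' h2')

lemma prod_reached_iff (F : SCD Y1 C1) (G : SCD Y2 C2)
    {w : (F.prod G).V} {s : List (Y1 × Y2)} :
    w ∈ (F.prod G).reached s ↔
      w.1 ∈ F.reached (s.map Prod.fst) ∧ w.2 ∈ G.reached (s.map Prod.snd) := by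
  constructor
  · rintro ⟨v0, hv0, htr⟩
    rw [prod_traces_iff] at htr
    exact ⟨⟨v0.1, hv0.1, htr.1⟩, ⟨v0.2, hv0.2, htr.2⟩⟩
  · rintro ⟨⟨v1, hv1, ht1⟩, ⟨v2, hv2, ht2⟩⟩
    exact ⟨(v1, v2), ⟨hv1, hv2⟩, (prod_traces_iff F G).2 ⟨ht1, ht2⟩⟩

lemma pair_reached_iff (G1 : SCD Y1 C1) (G2 : SCD Y2 C2) (ψ : Z → Y1 × Y2)
    {w : (pairSCD G1 G2 ψ).V} {s : List Z} :
    w ∈ (pairSCD G1 G2 ψ).reached s ↔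
      w.1 ∈ G1.reached ((s.map ψ).map Prod.fst) ∧
      w.2 ∈ G2.reached ((s.map ψ).map Prod.snd) := by
  constructor
  · rintro ⟨v0, hv0, htr⟩
    rw [pair_traces_iff] at htr
    exact ⟨⟨v0.1, hv0.1, htr.1⟩, ⟨v0.2, hv0.2, htr.2⟩⟩
  · rintro ⟨⟨v1, hv1, ht1⟩, ⟨v2, hv2, ht2⟩⟩
    exact ⟨(v1, v2), ⟨hv1, hv2⟩, (pair_traces_iff G1 G2 ψ).2 ⟨ht1, ht2⟩⟩

lemma deltaFrom_fst_snd {rel1 : Y1 → D1 → Y1 → Prop} {rel2 : Y2 → D2 → Y2 → Prop}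
    {y : Y1 × Y2} {rest : List (Y1 × Y2)} {ds : List (D1 × D2)}
    (h : DeltaFrom (fun y d y' => rel1 y.1 d.1 y'.1 ∧ rel2 y.2 d.2 y'.2) y rest ds) :
    DeltaFrom rel1 y.1 (rest.map Prod.fst) (ds.map Prod.fst) ∧
    DeltaFrom rel2 y.2 (rest.map Prod.snd) (ds.map Prod.snd) := by
  induction h with
  | nil y => exact ⟨.nil _, .nil _⟩
  | cons hr _ ih => exact ⟨.cons hr.1 ih.1, .cons hr.2 ih.2⟩

lemma deltaFrom_pair {rel1 : Y1 → D1 → Y1 → Prop} {rel2 : Y2 → D2 → Y2 → Prop}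
    {y : Y1 × Y2} {rest : List (Y1 × Y2)} {ds1 : List D1} {ds2 : List D2}
    (h1 : DeltaFrom rel1 y.1 (rest.map Prod.fst) ds1)
    (h2 : DeltaFrom rel2 y.2 (rest.map Prod.snd) ds2) :
    ∃ ds : List (D1 × D2),
      DeltaFrom (fun y d y' => rel1 y.1 d.1 y'.1 ∧ rel2 y.2 d.2 y'.2) y rest ds := by
  induction rest generalizing y ds1 ds2 with
  | nil => exact ⟨[], .nil _⟩
  | cons z rest ih =>
    cases h1 with
    | @cons _ _ d1 _ _ hr1 h1' =>
      cases h2 with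
      | @cons _ _ d2 _ _ hr2 h2' =>
        obtain ⟨ds, hds⟩ := ih h1' h2'
        exact ⟨(d1, d2) :: ds, .cons ⟨hr1, hr2⟩ hds⟩

end Aux

/-- if `F1` has a derivative under `(D1,▷1)` and `F2` has a
derivative under `(D2,▷2)`, then `F1 × F2` has a derivative under the direct
product variator. -/
theorem stmt6 {Y1 Y2 D1 D2 C1 C2 : Type}
    (F1 : SCD Y1 C1) (F2 : SCD Y2 C2)
    (rel1 : Y1 → D1 → Y1 → Prop) (rel2 : Y2 → D2 → Y2 → Prop)
    (h1 : Simulatable F1 (DeltaRel F1.lang rel1))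
    (h2 : Simulatable F2 (DeltaRel F2.lang rel2)) :
    Simulatable (F1.prod F2)
      (DeltaRel (F1.prod F2).lang
        (fun (y : Y1 × Y2) (d : D1 × D2) (y' : Y1 × Y2) =>
          rel1 y.1 d.1 y'.1 ∧ rel2 y.2 d.2 y'.2)) := by
  obtain ⟨F1', hF1'⟩ := h1
  obtain ⟨F2', hF2'⟩ := h2
  set φ : (Y1 × Y2) ⊕ (D1 × D2) → (Y1 ⊕ D1) × (Y2 ⊕ D2) :=
    Sum.elim (fun y => (Sum.inl y.1, Sum.inl y.2))
      (fun d => (Sum.inr d.1, Sum.inr d.2)) with hφ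
  refine ⟨pairSCD F1' F2' φ, ?_⟩
  intro s hs
  obtain ⟨w, hw⟩ := hs
  rw [prod_reached_iff] at hw
  have hs1 : s.map Prod.fst ∈ F1.lang := ⟨w.1, hw.1⟩
  have hs2 : s.map Prod.snd ∈ F2.lang := ⟨w.2, hw.2⟩
  have hs' : s ∈ (F1.prod F2).lang := ⟨w, (prod_reached_iff F1 F2).2 hw⟩
  have key : ∀ t, DeltaRel (F1.prod F2).lang
      (fun y d y' => rel1 y.1 d.1 y'.1 ∧ rel2 y.2 d.2 y'.2) s t →
      DeltaRel F1.lang rel1 (s.map Prod.fst) ((t.map φ).map Prod.fst) ∧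
      DeltaRel F2.lang rel2 (s.map Prod.snd) ((t.map φ).map Prod.snd) := by
    rintro t ⟨-, ⟨rfl, rfl⟩ | ⟨y, rest, ds, rfl, rfl, hdf⟩⟩
    · exact ⟨⟨hs1, Or.inl ⟨rfl, rfl⟩⟩, ⟨hs2, Or.inl ⟨rfl, rfl⟩⟩⟩
    · obtain ⟨hdf1, hdf2⟩ := deltaFrom_fst_snd hdf
      refine ⟨⟨hs1, Or.inr ⟨y.1, rest.map Prod.fst, ds.map Prod.fst, rfl, ?_, hdf1⟩⟩,
              ⟨hs2, Or.inr ⟨y.2, rest.map Prod.snd, ds.map Prod.snd, rfl, ?_, hdf2⟩⟩⟩ <;>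
        simp [hφ, List.map_map, Function.comp_def]
  refine ⟨?_, ?_⟩
  · obtain ⟨t1, ht1⟩ := (hF1' _ hs1).1
    obtain ⟨t2, ht2⟩ := (hF2' _ hs2).1
    cases s with
    | nil => exact ⟨[], ⟨hs', Or.inl ⟨rfl, rfl⟩⟩⟩
    | cons y rest =>
      obtain ⟨-, h | ⟨y1, r1, ds1, he1, -, hdf1⟩⟩ := ht1
      · simp at h
      obtain ⟨-, h | ⟨y2, r2, ds2, he2, -, hdf2⟩⟩ := ht2
      · simp at h
      simp only [List.map_cons] at he1 he2
      injection he1 with hy1 hr1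
      injection he2 with hy2 hr2
      subst hy1; subst hr1; subst hy2; subst hr2
      obtain ⟨ds, hds⟩ := deltaFrom_pair (rel1 := rel1) (rel2 := rel2) hdf1 hdf2
      exact ⟨Sum.inl y :: ds.map Sum.inr, ⟨hs', Or.inr ⟨y, rest, ds, rfl, rfl, hds⟩⟩⟩
  · intro t ht
    obtain ⟨hR1, hR2⟩ := key t ht
    obtain ⟨hl1, ho1⟩ := (hF1' _ hs1).2 _ hR1
    obtain ⟨hl2, ho2⟩ := (hF2' _ hs2).2 _ hR2
    constructor
    · obtain ⟨w1, hw1⟩ := hl1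
      obtain ⟨w2, hw2⟩ := hl2
      exact ⟨(w1, w2), (pair_reached_iff _ _ _).2 ⟨hw1, hw2⟩⟩
    · rintro ⟨c1, c2⟩ hc
      simp only [SCD.outs, Set.mem_iUnion, exists_prop] at hc ⊢
      obtain ⟨v, hv, hcv⟩ := hc
      rw [pair_reached_iff] at hv
      have hc1 : c1 ∈ F1.outs (s.map Prod.fst) :=
        ho1 (Set.mem_biUnion hv.1 hcv.1)
      have hc2 : c2 ∈ F2.outs (s.map Prod.snd) :=
        ho2 (Set.mem_biUnion hv.2 hcv.2)
      simp only [SCD.outs, Set.mem_iUnion, exists_prop] at hc1 hc2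
      obtain ⟨u1, hu1, hcu1⟩ := hc1
      obtain ⟨u2, hu2, hcu2⟩ := hc2
      exact ⟨(u1, u2), (prod_reached_iff F1 F2).2 ⟨hu1, hu2⟩, ⟨hcu1, hcu2⟩⟩
end

section
/- Let G be a finite simple undirected graph with edge list e1, …, em (m ≥ 1), and let F_G be the sensori-computational device constructed from G as described in the context. Then G admits a proper 3-coloring if and only if there exists an observation variator (D, ▷) with |D| ≤ 3 such that F_G is Δ(F_G, D)-simulatable (i.e., F_G has a derivative under (D, ▷)). -/
/-- States of the device constructed from a graph with `m` listed edges: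
an initial state `v0` and, for each edge `j`, a head `h j`, middle states
`m1 j`, `m2 j`, and tail states `t1 j`, `t2 j`. -/
inductive GState (m : ℕ) : Type
  | v0 : GState m
  | h (j : Fin m) : GState m
  | m1 (j : Fin m) : GState m
  | m2 (j : Fin m) : GState m
  | t1 (j : Fin m) : GState m
  | t2 (j : Fin m) : GState m
  deriving DecidableEq, Fintype

/-- Transitions of the device constructed from the edge list `E`
(observations are `Option Vg`, with `none` playing the role of the fresh
symbol `x`). -/
def gTau {Vg : Type} {m : ℕ} (E : Fin m → Vg × Vg) :
    GState m → GState m → Set (Option Vg)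
  | GState.v0, GState.h j => if (j : ℕ) = 0 then {none} else ∅
  | GState.h j, GState.m1 k => if j = k then {some (E j).1} else ∅
  | GState.h j, GState.m2 k => if j = k then {some (E j).2} else ∅
  | GState.m1 j, GState.t1 k => if j = k then {some (E j).1} else ∅
  | GState.m2 j, GState.t2 k => if j = k then {some (E j).2} else ∅
  | GState.t1 j, GState.h k => if (j : ℕ) + 1 = (k : ℕ) then {none} else ∅
  | GState.t2 j, GState.h k => if (j : ℕ) + 1 = (k : ℕ) then {none} else ∅
  | _, _ => ∅

/-- Outputs: `0` everywhere except `1` at `m1` states and `2` at `m2`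
states. -/
def gOut {m : ℕ} : GState m → Set (Fin 3)
  | GState.m1 _ => {1}
  | GState.m2 _ => {2}
  | _ => {0}

/-- The sensori-computational device `F_G` constructed from the edge list
`E` of a graph. -/
def FG {Vg : Type} {m : ℕ} (E : Fin m → Vg × Vg) :
    SCD (Option Vg) (Fin 3) where
  V := GState m
  finV := inferInstance
  V0 := {GState.v0}
  V0_nonempty := ⟨GState.v0, rfl⟩
  tr := gTau E
  out := gOut
  out_nonempty := fun v => by cases v <;> exact ⟨_, rfl⟩

/-!
A proper 3-colouring `c` yields the memoryless variator `y ▷_d y' :↔ d = c y'`. In `F_G` the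
only state with two outgoing observations is the head of an edge, where they are the two
endpoints, so they receive different differences; since `F_G` is deterministic, relabelling its
transitions accordingly gives a derivative.

Conversely, the strings leading to `m1j` and `m2j` share the prefix leading to `hj`, which ends in
`x`, and differ only in their last observation `uj` resp. `wj`. If some difference `d` satisfied
both `x ▷_d uj` and `x ▷_d wj`, the two strings would have a common `Δ`-image, whose outputs would
lie in `{1} ∩ {2}`. Hence the sets `{d | x ▷_d v}`, nonempty for every endpoint `v`, are disjoint
on each edge, and an embedding `D ↪ Fin 3` turns them into a colouring.
-/
namespace SCD

variable {Y Z C : Type}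

theorem Traces.append {F : SCD Y C} {u v w : F.V} {s s' : List Y}
    (h : F.Traces u s v) (h' : F.Traces v s' w) : F.Traces u (s ++ s') w := by
  induction h with
  | nil => exact h'
  | cons hy _ ih => exact .cons hy (ih h')

def IsDeterministic (F : SCD Y C) : Prop :=
  ∀ ⦃v w w' : F.V⦄ ⦃y : Y⦄, y ∈ F.tr v w → y ∈ F.tr v w' → w = w'

theorem IsDeterministic.traces_unique {F : SCD Y C} (hF : F.IsDeterministic)
    {v w w' : F.V} {s : List Y} (h : F.Traces v s w) (h' : F.Traces v s w') : w = w' := by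
  induction h with
  | nil => cases h'; rfl
  | cons hy _ ih =>
    cases h' with
    | cons hy' h' => cases hF hy hy'; exact ih h'

theorem IsDeterministic.outs_eq {F : SCD Y C} (hF : F.IsDeterministic) {v₀ w : F.V}
    (hV₀ : F.V0 = {v₀}) {s : List Y} (h : F.Traces v₀ s w) : F.outs s = F.out w := by
  ext c
  simp only [outs, reached, hV₀, Set.mem_singleton_iff, exists_eq_left, Set.mem_iUnion,
    Set.mem_ofPred_eq, exists_prop]
  exact ⟨fun ⟨w', hw', hc⟩ => hF.traces_unique h hw' ▸ hc, fun hc => ⟨w, h, hc⟩⟩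

def relabel (F : SCD Y C) (ρ : Y → Z → Prop) : SCD Z C where
  V := F.V
  finV := F.finV
  V0 := F.V0
  V0_nonempty := F.V0_nonempty
  tr v w := {z | ∃ y ∈ F.tr v w, ρ y z}
  out := F.out
  out_nonempty := F.out_nonempty

theorem Traces.relabel {F : SCD Y C} {ρ : Y → Z → Prop} {v w : F.V} {s : List Y}
    {t : List Z} (h : F.Traces v s w) (hst : List.Forall₂ ρ s t) :
    (F.relabel ρ).Traces v t w := by
  induction h generalizing t with
  | nil => cases hst; exact .nil _
  | cons hy _ ih =>
    cases hst with
    | cons hyz hst => exact .cons ⟨_, hy, hyz⟩ (ih hst)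

theorem IsDeterministic.eq_of_traces_relabel {F : SCD Y C} (hF : F.IsDeterministic)
    {ρ : Y → Z → Prop}
    (hρ : ∀ ⦃v w w' : F.V⦄ ⦃y y' : Y⦄ ⦃z : Z⦄,
      y ∈ F.tr v w → y' ∈ F.tr v w' → ρ y z → ρ y' z → y = y')
    {v w w' : F.V} {s : List Y} {t : List Z} (h : F.Traces v s w)
    (hst : List.Forall₂ ρ s t) (h' : (F.relabel ρ).Traces v t w') : w' = w := by
  induction h generalizing t with
  | nil => cases hst; match h' with | .nil _ => rfl
  | cons hy _ ih =>
    cases hst with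
    | cons hyz hst =>
      match h' with
      | .cons ⟨y', hy', hy'z⟩ h' =>
        cases hρ hy hy' hyz hy'z
        cases hF hy hy'
        exact ih hst h'

end SCD

section DeltaFrom

variable {Y D : Type}

theorem deltaFrom_append_singleton_iff {rel : Y → D → Y → Prop} {y a : Y} {l : List Y}
    {ds : List D} :
    DeltaFrom rel y (l ++ [a]) ds ↔
      ∃ ds' d, ds = ds' ++ [d] ∧ DeltaFrom rel y l ds' ∧ rel (l.getLastD y) d a := by
  induction l generalizing y ds with
  | nil =>
    constructor
    · rintro (_ | ⟨hd, ⟨⟩⟩)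
      exact ⟨[], _, rfl, .nil _, hd⟩
    · rintro ⟨ds', d, rfl, ⟨⟩, hd⟩
      exact .cons hd (.nil _)
  | cons b l ih =>
    constructor
    · rintro (_ | ⟨hb, h⟩)
      obtain ⟨ds', d, rfl, h, hd⟩ := ih.1 h
      exact ⟨_ :: ds', d, rfl, .cons hb h, by rwa [List.getLastD_cons]⟩
    · rintro ⟨ds', d, rfl, _ | ⟨hb, h⟩, hd⟩
      rw [List.getLastD_cons] at hd
      exact .cons hb (ih.2 ⟨_, d, rfl, h, hd⟩)

theorem deltaFrom_iff_eq_map (f : Y → D) {y : Y} {l : List Y} {ds : List D} :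
    DeltaFrom (fun _ d y' => d = f y') y l ds ↔ ds = l.map f := by
  induction l generalizing y ds with
  | nil => exact ⟨fun (.nil _) => rfl, fun h => h ▸ .nil _⟩
  | cons a l ih =>
    constructor
    · rintro (_ | ⟨rfl, h⟩)
      rw [ih.1 h, List.map_cons]
    · rintro rfl
      exact .cons rfl (ih.2 rfl)

end DeltaFrom

section Simulation

variable {Y D C : Type}

theorem SCD.IsDeterministic.outSim_relabel {Z : Type} {F : SCD Y C}
    (hF : F.IsDeterministic) (hV₀ : F.V0.Subsingleton) {ρ : Y → Z → Prop}
    (hρ : ∀ ⦃v w w' : F.V⦄ ⦃y y' : Y⦄ ⦃z : Z⦄,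
      y ∈ F.tr v w → y' ∈ F.tr v w' → ρ y z → ρ y' z → y = y')
    {R : List Y → List Z → Prop} (hR : ∀ s t, R s t → List.Forall₂ ρ s t)
    (hex : ∀ s ∈ F.lang, ∃ t, R s t) : OutSim F (F.relabel ρ) R := by
  intro s hs
  refine ⟨hex s hs, fun t hst => ?_⟩
  obtain ⟨w, v₀, hv₀, hw⟩ := hs
  refine ⟨⟨w, v₀, hv₀, hw.relabel (hR s t hst)⟩, fun c hc => ?_⟩
  obtain ⟨w', ⟨v₀', hv₀', hw'⟩, hc⟩ := Set.mem_iUnion₂.1 hc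
  obtain rfl := hV₀ hv₀' hv₀
  obtain rfl := hF.eq_of_traces_relabel hρ hw (hR s t hst) hw'
  exact Set.mem_biUnion ⟨v₀', hv₀', hw⟩ hc

theorem forall₂_of_deltaRel {L : Set (List Y)} (f : Y → D) {s : List Y}
    {t : List (Y ⊕ D)} (h : DeltaRel L (fun _ d y' => d = f y') s t) :
    List.Forall₂ (fun y z => z = .inl y ∨ z = .inr (f y)) s t := by
  obtain ⟨-, ⟨rfl, rfl⟩ | ⟨y, l, ds, rfl, rfl, hds⟩⟩ := h
  · exact .nil
  · rw [(deltaFrom_iff_eq_map f).1 hds, List.map_map]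
    exact .cons (.inl rfl) (List.forall₂_map_right_iff.2 (List.forall₂_same.2
      fun _ _ => .inr rfl))

theorem exists_deltaRel {L : Set (List Y)} (f : Y → D) {s : List Y} (hs : s ∈ L) :
    ∃ t, DeltaRel L (fun _ d y' => d = f y') s t := by
  cases s with
  | nil => exact ⟨[], hs, .inl ⟨rfl, rfl⟩⟩
  | cons y l => exact ⟨_, hs, .inr ⟨y, l, _, rfl, rfl, (deltaFrom_iff_eq_map f).2 rfl⟩⟩

theorem SCD.IsDeterministic.simulatable_deltaRel {F : SCD Y C} (hF : F.IsDeterministic)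
    (hV₀ : F.V0.Subsingleton) (f : Y → D)
    (hf : ∀ ⦃v w w' : F.V⦄ ⦃y y' : Y⦄,
      y ∈ F.tr v w → y' ∈ F.tr v w' → f y = f y' → y = y') :
    Simulatable F (DeltaRel F.lang (fun _ d y' => d = f y')) := by
  refine ⟨_, hF.outSim_relabel hV₀ ?_ (fun _ _ => forall₂_of_deltaRel f)
    (fun _ => exists_deltaRel f)⟩
  rintro v w w' y y' z hy hy' (rfl | rfl) (h | h)
  · exact Sum.inl_injective h
  · exact absurd h Sum.inl_ne_inr
  · exact absurd h Sum.inr_ne_inl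
  · exact hf hy hy' (Sum.inr_injective h)

end Simulation

namespace OutSim

variable {Y D C : Type} {F : SCD Y C} {F' : SCD (Y ⊕ D) C} {rel : Y → D → Y → Prop}

theorem exists_deltaFrom (hsim : OutSim F F' (DeltaRel F.lang rel)) {y : Y} {l : List Y}
    (hs : y :: l ∈ F.lang) : ∃ ds, DeltaFrom rel y l ds := by
  obtain ⟨t, -, ⟨h, -⟩ | ⟨y', l', ds, hs', -, hds⟩⟩ := (hsim _ hs).1
  · exact absurd h (List.cons_ne_nil _ _)
  · obtain ⟨rfl, rfl⟩ := List.cons_eq_cons.1 hs'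
    exact ⟨ds, hds⟩

theorem exists_rel_getLastD (hsim : OutSim F F' (DeltaRel F.lang rel)) {y a : Y}
    {l : List Y} (hs : y :: (l ++ [a]) ∈ F.lang) : ∃ d, rel (l.getLastD y) d a := by
  obtain ⟨ds, hds⟩ := hsim.exists_deltaFrom hs
  obtain ⟨-, d, -, -, hd⟩ := deltaFrom_append_singleton_iff.1 hds
  exact ⟨d, hd⟩

/-- Both strings are `Δ`-related to one string, whose outputs lie in the outputs of both. -/
theorem outs_inter_nonempty (hsim : OutSim F F' (DeltaRel F.lang rel)) {y a a' : Y}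
    {l : List Y} {d : D} (hs : y :: (l ++ [a]) ∈ F.lang) (hs' : y :: (l ++ [a']) ∈ F.lang)
    (hd : rel (l.getLastD y) d a) (hd' : rel (l.getLastD y) d a') :
    (F.outs (y :: (l ++ [a])) ∩ F.outs (y :: (l ++ [a']))).Nonempty := by
  obtain ⟨ds, hds⟩ := hsim.exists_deltaFrom hs
  obtain ⟨ds, -, rfl, hds, -⟩ := deltaFrom_append_singleton_iff.1 hds
  set t : List (Y ⊕ D) := .inl y :: (ds ++ [d]).map .inr
  have hrel : ∀ b, rel (l.getLastD y) d b → y :: (l ++ [b]) ∈ F.lang →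
      DeltaRel F.lang rel (y :: (l ++ [b])) t := fun b hb hsb =>
    ⟨hsb, .inr ⟨y, _, _, rfl, rfl, deltaFrom_append_singleton_iff.2 ⟨ds, d, rfl, hds, hb⟩⟩⟩
  obtain ⟨⟨w, hw⟩, hsub⟩ := (hsim _ hs).2 t (hrel a hd hs)
  obtain ⟨c, hc⟩ := F'.out_nonempty w
  have hct : c ∈ F'.outs t := Set.mem_biUnion hw hc
  exact ⟨c, hsub hct, ((hsim _ hs').2 t (hrel a' hd' hs')).2 hct⟩

end OutSim

theorem exists_coloring_of_separating {V D : Type} [Fintype D] {k m : ℕ} [NeZero k]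
    (hD : Fintype.card D ≤ k) (S : V → D → Prop) (E : Fin m → V × V)
    (hne : ∀ j, (∃ d, S (E j).1 d) ∧ ∃ d, S (E j).2 d)
    (hsep : ∀ j d, S (E j).1 d → ¬S (E j).2 d) :
    ∃ col : V → Fin k, ∀ j, col (E j).1 ≠ col (E j).2 := by
  classical
  obtain ⟨f⟩ : Nonempty (D ↪ Fin k) :=
    Function.Embedding.nonempty_of_card_le (by rwa [Fintype.card_fin])
  refine ⟨fun v => if h : ∃ d, S v d then f h.choose else 0, fun j hj => ?_⟩
  obtain ⟨h₁, h₂⟩ := hne j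
  simp only [dif_pos h₁, dif_pos h₂] at hj
  exact hsep j _ h₁.choose_spec (f.injective hj ▸ h₂.choose_spec)

namespace FG

open GState

variable {Vg : Type} {m : ℕ}

theorem isDeterministic {E : Fin m → Vg × Vg} (hloop : ∀ j, (E j).1 ≠ (E j).2) :
    (FG E).IsDeterministic := by
  intro v w w' y hw hw'
  cases v <;> cases w <;> cases w' <;>
    simp only [FG, gTau, Set.mem_ite_empty_right, Set.mem_singleton_iff,
      Set.mem_empty_iff_false] at hw hw' <;> grind

theorem label_injective {E : Fin m → Vg × Vg} {col : Vg → Fin 3}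
    (hcol : ∀ j, col (E j).1 ≠ col (E j).2) ⦃v w w' : GState m⦄ ⦃y y' : Option Vg⦄
    (hy : y ∈ (FG E).tr v w) (hy' : y' ∈ (FG E).tr v w')
    (h : y.elim 0 col = y'.elim 0 col) : y = y' := by
  cases v <;> cases w <;> cases w' <;>
    simp only [FG, gTau, Set.mem_ite_empty_right, Set.mem_singleton_iff,
      Set.mem_empty_iff_false] at hy hy' <;> grind

theorem exists_traces_h (E : Fin m → Vg × Vg) (j : Fin m) :
    ∃ l, (FG E).Traces v0 (none :: l) (h j) ∧ l.getLastD none = none := by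
  obtain ⟨k, hk⟩ := j
  induction k with
  | zero => exact ⟨[], .cons (by simp [FG, gTau]) (.nil _), rfl⟩
  | succ k ih =>
    have hk' : k < m := Nat.lt_of_succ_lt hk
    obtain ⟨l, hl, -⟩ := ih hk'
    refine ⟨l ++ [some (E ⟨k, hk'⟩).1, some (E ⟨k, hk'⟩).1, none], ?_, by simp⟩
    refine hl.append
      (.cons (w := m1 ⟨k, hk'⟩) ?_ (.cons (w := t1 ⟨k, hk'⟩) ?_ (.cons ?_ (.nil _)))) <;>
      simp [FG, gTau]

theorem exists_traces_m (E : Fin m → Vg × Vg) (j : Fin m) :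
    ∃ l, l.getLastD none = none ∧
      (FG E).Traces v0 (none :: (l ++ [some (E j).1])) (m1 j) ∧
      (FG E).Traces v0 (none :: (l ++ [some (E j).2])) (m2 j) := by
  obtain ⟨l, hl, hlast⟩ := exists_traces_h E j
  refine ⟨l, hlast, ?_, ?_⟩ <;> refine hl.append (.cons ?_ (.nil _)) <;> simp [FG, gTau]

theorem separating_of_outSim {E : Fin m → Vg × Vg} (hloop : ∀ j, (E j).1 ≠ (E j).2)
    {D : Type} {rel : Option Vg → D → Option Vg → Prop} {F' : SCD (Option Vg ⊕ D) (Fin 3)}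
    (hsim : OutSim (FG E) F' (DeltaRel (FG E).lang rel)) (j : Fin m) :
    ((∃ d, rel none d (some (E j).1)) ∧ ∃ d, rel none d (some (E j).2)) ∧
      ∀ d, rel none d (some (E j).1) → ¬rel none d (some (E j).2) := by
  obtain ⟨l, hlast, h₁, h₂⟩ := exists_traces_m E j
  have hs₁ : _ ∈ (FG E).lang := ⟨_, v0, rfl, h₁⟩
  have hs₂ : _ ∈ (FG E).lang := ⟨_, v0, rfl, h₂⟩
  refine ⟨⟨?_, ?_⟩, fun d hd₁ hd₂ => ?_⟩
  · simpa only [hlast] using hsim.exists_rel_getLastD hs₁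
  · simpa only [hlast] using hsim.exists_rel_getLastD hs₂
  obtain ⟨c, hc₁, hc₂⟩ :=
    hsim.outs_inter_nonempty hs₁ hs₂ (by rwa [hlast]) (by rwa [hlast])
  rw [(isDeterministic hloop).outs_eq rfl h₁] at hc₁
  rw [(isDeterministic hloop).outs_eq rfl h₂] at hc₂
  exact absurd (hc₁.symm.trans hc₂) (by decide)

end FG

theorem stmt7_general {Vg : Type} {m : ℕ} (E : Fin m → Vg × Vg)
    (hloop : ∀ j, (E j).1 ≠ (E j).2) :
    (∃ col : Vg → Fin 3, ∀ j, col (E j).1 ≠ col (E j).2) ↔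
    (∃ (D : Type) (instD : Fintype D)
        (rel : Option Vg → D → Option Vg → Prop),
        @Fintype.card D instD ≤ 3 ∧
        Simulatable (FG E) (DeltaRel (FG E).lang rel)) := by
  constructor
  · rintro ⟨col, hcol⟩
    exact ⟨Fin 3, inferInstance, _, (Fintype.card_fin 3).le,
      (FG.isDeterministic hloop).simulatable_deltaRel Set.subsingleton_singleton
        (Option.elim · 0 col) (FG.label_injective hcol)⟩
  · rintro ⟨D, _, rel, hD, F', hsim⟩
    have hsep := FG.separating_of_outSim hloop hsim
    exact exists_coloring_of_separating hD (fun v d => rel none d (some v)) E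
      (fun j => (hsep j).1) (fun j => (hsep j).2)

/-- a finite simple undirected graph, given by an edge list
`E : Fin m → Vg × Vg` (with `m ≥ 1`, loopless, and edges pairwise distinct
as unordered pairs) admits a proper 3-coloring iff there is an observation
variator with at most 3 differences under which `F_G` has a derivative. -/
theorem stmt7 {Vg : Type} {m : ℕ} (hm : 0 < m) (E : Fin m → Vg × Vg)
    (hloop : ∀ j, (E j).1 ≠ (E j).2)
    (hsimple : ∀ j k,
        (((E j).1 = (E k).1 ∧ (E j).2 = (E k).2) ∨
         ((E j).1 = (E k).2 ∧ (E j).2 = (E k).1)) → j = k) :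
    (∃ col : Vg → Fin 3, ∀ j, col (E j).1 ≠ col (E j).2) ↔
    (∃ (D : Type) (instD : Fintype D)
        (rel : Option Vg → D → Option Vg → Prop),
        @Fintype.card D instD ≤ 3 ∧
        Simulatable (FG E) (DeltaRel (FG E).lang rel)) :=
  stmt7_general E hloop
end

section
/- Let Σ be an alphabet and N ⊆ Σ a nonempty subset, and let s be a string over Σ that is empty or whose first symbol is not in N. Then every t with s P_N t also satisfies s (π_N ⨟ P_N) t. Moreover, if s contains at least one symbol of N then the inclusion is strict at s: the set {t : s (π_N ⨟ P_N) t} strictly contains {t : s P_N t}; and if s contains no symbol of N then the two sets are equal. -/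
/-!
As `s` does not start with a symbol of `N`, each symbol that `π_N` deletes from `s` has a
nonempty prefix in front of it, so `P_N` can insert it back: `π_N s P_N s`, and transitivity of
`P_N` gives the inclusion. If `s` contains a symbol of `N`, then `π_N s` lies in the larger set
but is shorter than `s`, whereas pumping never shortens a string. Otherwise `π_N s = s`.
-/

/-- The `N`-pump: the smallest relation with `ε P ε`, `s P s`, and closed
under inserting a symbol `b ∈ N` at any position except before the first
symbol. -/
inductive Pump {A : Type} (N : Set A) : List A → List A → Prop
  | refl (s : List A) : Pump N s s
  | insert {s t1 t2 : List A} {b : A} :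
      b ∈ N → Pump N s (t1 ++ t2) → t1 ≠ [] → Pump N s (t1 ++ b :: t2)

open Classical in
/-- The `N`-shrink: delete all occurrences of symbols in `N`. -/
noncomputable def shrink {A : Type} (N : Set A) : List A → List A
  | [] => []
  | a :: s => if a ∈ N then shrink N s else a :: shrink N s

/-- The `N`-shrink, as a relation (graph of the function). -/
def shrinkRel {A : Type} (N : Set A) : List A → List A → Prop :=
  fun s t => t = shrink N s

section

variable {A : Type} {N : Set A}

theorem Pump.trans {a b c : List A} (hab : Pump N a b) (hbc : Pump N b c) : Pump N a c := by
  induction hbc with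
  | refl => exact hab
  | insert hb _ ht1 ih => exact Pump.insert hb ih ht1

theorem Pump.length_le {s t : List A} (h : Pump N s t) : s.length ≤ t.length := by
  induction h with
  | refl => exact le_rfl
  | insert _ _ _ ih => simp only [List.length_append, List.length_cons] at ih ⊢; omega

open Classical in
theorem shrink_eq_filter (s : List A) : shrink N s = s.filter (fun a => decide (a ∉ N)) := by
  induction s with
  | nil => rfl
  | cons a s ih => by_cases ha : a ∈ N <;> simp [shrink, ha, ih]

theorem length_shrink_lt {s : List A} (h : ∃ a ∈ s, a ∈ N) :
    (shrink N s).length < s.length := by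
  classical
  simpa [shrink_eq_filter, List.length_filter_lt_length_iff_exists] using h

theorem shrink_eq_self {s : List A} (h : ∀ a ∈ s, a ∉ N) : shrink N s = s := by
  classical
  simpa [shrink_eq_filter, List.filter_eq_self] using h

theorem pump_append_shrink (s : List A) {u : List A} (hu : u ≠ []) :
    Pump N (u ++ shrink N s) (u ++ s) := by
  induction s generalizing u with
  | nil => exact Pump.refl _
  | cons b s ih =>
    by_cases hb : b ∈ N
    · simpa only [shrink, if_pos hb] using Pump.insert hb (ih hu) hu
    · simpa only [shrink, if_neg hb, List.append_assoc, List.singleton_append]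
        using ih (u := u ++ [b]) (by simp)

theorem pump_shrink {s : List A} (hs : ∀ a, s.head? = some a → a ∉ N) :
    Pump N (shrink N s) s := by
  cases s with
  | nil => exact Pump.refl []
  | cons a s =>
    simpa only [shrink, if_neg (hs a rfl), List.singleton_append]
      using pump_append_shrink (N := N) s (u := [a]) (by simp)

theorem relComp_shrinkRel_iff {R : List A → List A → Prop} {s t : List A} :
    relComp (shrinkRel N) R s t ↔ R (shrink N s) t :=
  ⟨fun ⟨_, hb, hR⟩ => hb ▸ hR, fun h => ⟨_, rfl, h⟩⟩

end

theorem stmt9_general {A : Type} (N : Set A) (s : List A)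
    (hs : ∀ a, s.head? = some a → a ∉ N) :
    (∀ t, Pump N s t → relComp (shrinkRel N) (Pump N) s t) ∧
    ((∃ a ∈ s, a ∈ N) →
      {t | Pump N s t} ⊂ {t | relComp (shrinkRel N) (Pump N) s t}) ∧
    ((∀ a ∈ s, a ∉ N) →
      {t | Pump N s t} = {t | relComp (shrinkRel N) (Pump N) s t}) := by
  simp only [relComp_shrinkRel_iff]
  have pump_sub : ∀ t, Pump N s t → Pump N (shrink N s) t :=
    fun t ht => (pump_shrink hs).trans ht
  refine ⟨pump_sub, fun hmem => ⟨pump_sub, fun hsup => ?_⟩, fun hnone => ?_⟩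
  · have : s.length ≤ (shrink N s).length := (hsup (Pump.refl (shrink N s))).length_le
    exact absurd (length_shrink_lt hmem) (not_lt.mpr this)
  · rw [shrink_eq_self hnone]

/-- for nonempty `N` and a string `s` that is empty or whose
first symbol is not in `N`: every `t` with `s P_N t` also has
`s (π_N ⨟ P_N) t`; if `s` contains a symbol of `N` the containment of the
image sets is strict; if `s` contains no symbol of `N` they are equal. -/
theorem stmt9 {A : Type} (N : Set A) (hN : N.Nonempty) (s : List A)
    (hs : ∀ a, s.head? = some a → a ∉ N) :
    (∀ t, Pump N s t → relComp (shrinkRel N) (Pump N) s t) ∧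
    ((∃ a ∈ s, a ∈ N) →
      {t | Pump N s t} ⊂ {t | relComp (shrinkRel N) (Pump N) s t}) ∧
    ((∀ a ∈ s, a ∉ N) →
      {t | Pump N s t} = {t | relComp (shrinkRel N) (Pump N) s t}) :=
  stmt9_general N s hs
end

section
/- Let F be a sensori-computational device and N ⊆ Y(F). If F is π_N-simulatable (there exists an SCD that output simulates F modulo the graph of the N-shrink over alphabet Y(F)), then F is P_N-simulatable (there exists an SCD that output simulates F modulo the N-pump over alphabet Y(F)). -/
/-- Auxiliary device: remove `N`-labeled transitions and add `N` self-loops. -/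
noncomputable def pumpDev {Y C : Type} (N : Set Y) (F' : SCD Y C) : SCD Y C where
  V := F'.V
  finV := F'.finV
  V0 := F'.V0
  V0_nonempty := F'.V0_nonempty
  tr v w := {y | y ∉ N ∧ y ∈ F'.tr v w} ∪ {y | v = w ∧ y ∈ N}
  out := F'.out
  out_nonempty := F'.out_nonempty

lemma shrink_append {A : Type} (N : Set A) (l1 l2 : List A) :
    shrink N (l1 ++ l2) = shrink N l1 ++ shrink N l2 := by
  induction l1 with
  | nil => rfl
  | cons a l ih => by_cases h : a ∈ N <;> simp [shrink, h, ih]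

lemma pump_shrink_s11 {A : Type} {N : Set A} {s t : List A}
    (h : Pump N s t) : shrink N t = shrink N s := by
  induction h with
  | refl => rfl
  | insert hb hp hne ih =>
    rename_i t1 t2 b
    have hb' : shrink N (b :: t2) = shrink N t2 := by simp [shrink, hb]
    rw [shrink_append, hb', ← shrink_append, ih]

lemma traces_pump {Y C : Type} (N : Set Y) (F' : SCD Y C) {v w : (pumpDev N F').V} {t : List Y}
    (h : (pumpDev N F').Traces v t w) : F'.Traces v (shrink N t) w := by
  induction h with
  | nil => exact .nil _
  | cons hy htr ih =>
    rcases hy with ⟨hN, hy⟩ | ⟨rfl, hN⟩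
    · simpa [shrink, hN] using SCD.Traces.cons hy ih
    · simpa [shrink, hN] using ih

lemma traces_unpump {Y C : Type} (N : Set Y) (F' : SCD Y C) {v w : F'.V} (t : List Y)
    (h : F'.Traces v (shrink N t) w) : (pumpDev N F').Traces v t w := by
  induction t generalizing v with
  | nil =>
    simp only [shrink] at h
    cases h
    exact .nil _
  | cons y s ih =>
    by_cases hN : y ∈ N
    · rw [shrink, if_pos hN] at h
      exact .cons (Or.inr ⟨rfl, hN⟩) (ih h)
    · rw [shrink, if_neg hN] at h
      cases h with
      | cons hy htr => exact .cons (Or.inl ⟨hN, hy⟩) (ih htr)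

/-- if `F` is `π_N`-simulatable then `F` is
`P_N`-simulatable (relations over the alphabet `Y(F)`). -/
theorem stmt11 {Y C : Type} (F : SCD Y C) (N : Set Y)
    (h : Simulatable F (shrinkRel N)) :
    Simulatable F (Pump N) := by
  obtain ⟨F', hF'⟩ := h
  refine ⟨pumpDev N F', fun s hs => ?_⟩
  obtain ⟨-, h2⟩ := hF' s hs
  have hsh := h2 (shrink N s) rfl
  refine ⟨⟨s, Pump.refl s⟩, fun t hpt => ?_⟩
  have hst : shrink N t = shrink N s := pump_shrink_s11 hpt
  have hreach : (pumpDev N F').reached t = F'.reached (shrink N s) := by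
    ext w
    constructor
    · rintro ⟨v0, hv0, htr⟩
      exact ⟨v0, hv0, hst ▸ traces_pump N F' htr⟩
    · rintro ⟨v0, hv0, htr⟩
      exact ⟨v0, hv0, traces_unpump N F' t (hst ▸ htr)⟩
  have houts : (pumpDev N F').outs t = F'.outs (shrink N s) := by
    unfold SCD.outs
    rw [hreach]
    rfl
  constructor
  · show ((pumpDev N F').reached t).Nonempty
    rw [hreach]
    exact hsh.1
  · intro c hc
    exact hsh.2 (houts ▸ hc)
end

section
/- Let F be a sensori-computational device with a monoidal variator (monoid (D, ⊕, e) with right action α on Y(F)). If F is (Δ(F,D) ⨟ Λ_D)-simulatable, where Λ_D is the monoid disaggregator, then F is (Δ(F,D) ⨟ ∫_D)-simulatable, where ∫_D is (the graph of) the monoid integrator. -/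
/-- The monoid disaggregator `Λ_D`: relates `ε` to `ε`, `y₀` to `y₀`, and
`y₀d₁…dₘ` to `y₀d'₁…d'ₙ` whenever `d₁⊕…⊕dₘ = d'₁⊕…⊕d'ₙ`. -/
def Disagg (Y D : Type) [Monoid D] :
    List (Y ⊕ D) → List (Y ⊕ D) → Prop :=
  fun s t =>
    (s = [] ∧ t = []) ∨
    ∃ (y : Y) (ds ds' : List D),
      s = Sum.inl y :: ds.map Sum.inr ∧
      t = Sum.inl y :: ds'.map Sum.inr ∧ ds.prod = ds'.prod

/-- The monoid integrator `∫_D` (as a relation, the graph of the function):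
`ε ↦ ε`, `y₀ ↦ y₀`, and `y₀d₁…dₘ ↦ y₀(d₁⊕…⊕dₘ)` for `m ≥ 1`. -/
def Integ (Y D : Type) [Monoid D] :
    List (Y ⊕ D) → List (Y ⊕ D) → Prop :=
  fun s t =>
    (s = [] ∧ t = []) ∨
    (∃ y : Y, s = [Sum.inl y] ∧ t = [Sum.inl y]) ∨
    ∃ (y : Y) (ds : List D), ds ≠ [] ∧
      s = Sum.inl y :: ds.map Sum.inr ∧
      t = [Sum.inl y, Sum.inr ds.prod]

/-- for a monoidal variator, `(Δ(F,D) ⨟ Λ_D)`-simulatability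
implies `(Δ(F,D) ⨟ ∫_D)`-simulatability. -/
theorem stmt15 {Y C D : Type} [Monoid D] (F : SCD Y C) (α : Y → D → Y)
    (hid : ∀ y, α y 1 = y)
    (hcomp : ∀ y d1 d2, α (α y d1) d2 = α y (d1 * d2))
    (h : Simulatable F
      (relComp (DeltaRel F.lang (fun y d y' => α y d = y')) (Disagg Y D))) :
    Simulatable F
      (relComp (DeltaRel F.lang (fun y d y' => α y d = y')) (Integ Y D)) := by
  obtain ⟨F', hF'⟩ := h
  refine ⟨F', fun s hs => ?_⟩
  obtain ⟨⟨t0, u0, hΔ0, _⟩, hall⟩ := hF' s hs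
  constructor
  · -- existence: integrate u0
    rcases hΔ0.2 with ⟨_, hu⟩ | ⟨y, rest, ds, _, hu, _⟩
    · exact ⟨[], u0, hΔ0, Or.inl ⟨hu, rfl⟩⟩
    · rcases ds with _ | ⟨d, ds'⟩
      · exact ⟨_, u0, hΔ0, Or.inr (Or.inl ⟨y, hu, rfl⟩)⟩
      · exact ⟨_, u0, hΔ0, Or.inr (Or.inr ⟨y, d :: ds', by simp, hu, rfl⟩)⟩
  · rintro t ⟨u, hΔ, hI⟩
    refine hall t ⟨u, hΔ, ?_⟩
    rcases hI with ⟨hu, ht⟩ | ⟨y, hu, ht⟩ | ⟨y, ds, hne, hu, ht⟩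
    · exact Or.inl ⟨hu, ht⟩
    · exact Or.inr ⟨y, [], [], by simpa using hu, by simpa using ht, rfl⟩
    · exact Or.inr ⟨y, ds, [ds.prod], hu, by simpa using ht, by simp⟩
end
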